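/- arXiv:2510.08509 — 5 statements merged into one kernel-verified Lean document; each statement's English description precedes it below -/
import Mathlib

section
/- Let A'₁,...,A'_k be matrices with all absolute row-sums equal to 1, let D₀ = diag(d₀) with nonnegative entries, and let q be a probability distribution on [n₀] with q_i > 0 whenever (d₀)_i > 0. Define the random path (j₀,...,j_k) by sampling j₀ ∼ q and j_ℓ with probability |[A'_ℓ]_{j_{ℓ-1}, j_ℓ}|, and set the matrix-valued random variable X(j₀,...,j_k) = (d₀)_{j₀}/q_{j₀} · (∏_{ℓ=1}^k sign([A'_ℓ]_{j_{ℓ-1},j_ℓ})) · e_{j₀} e_{j_k}ᵀ. Then E[X] = D₀ A'₁ ⋯ A'_k. -/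
open scoped BigOperators

/-!
Since `|a| * rwSign a = a`, the sign factors turn the path weight `q j₀ * ∏ |A'_ℓ|` into
`q j₀ * ∏ A'_ℓ`, and `q j₀` cancels against `d j₀ / q j₀` (where `q` vanishes, so does `d`).
What remains is the sum over all paths from `i` to `j'` of the products of the entries of the
`A'_ℓ` along the path, i.e. the path expansion of the entry `(i, j')` of `A'₁ ⋯ A'_k`, which
follows by induction on `k`, splitting off the last step of the path.
-/

/-- Left-to-right product A₀ A₁ ⋯ A_{m-1}. -/
noncomputable def leftProd (n : ℕ → ℕ)
    (A : ∀ ℓ : ℕ, Matrix (Fin (n ℓ)) (Fin (n (ℓ + 1))) ℝ) :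
    ∀ m : ℕ, Matrix (Fin (n 0)) (Fin (n m)) ℝ
  | 0 => 1
  | (m + 1) => leftProd n A m * A m

/-- sign(x) = 1 if x ≥ 0, −1 otherwise. -/
noncomputable def rwSign (x : ℝ) : ℝ := if 0 ≤ x then 1 else -1

/-- Probability of a path (j₀,…,j_k): q(j₀)·∏_ℓ |A'_ℓ|_{j_{ℓ-1} j_ℓ}. -/
noncomputable def pathProb (k : ℕ) (n : ℕ → ℕ)
    (A' : ∀ ℓ : ℕ, Matrix (Fin (n ℓ)) (Fin (n (ℓ + 1))) ℝ)
    (q : Fin (n 0) → ℝ) (ω : (ℓ : Fin (k + 1)) → Fin (n ℓ.val)) : ℝ :=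
  q (ω ⟨0, Nat.succ_pos k⟩) * ∏ ℓ : Fin k, |A' ℓ (ω ℓ.castSucc) (ω ℓ.succ)|

/-- The (i,j') entry of the random matrix
    X(j₀,…,j_k) = (d₀)_{j₀}/q_{j₀} · (∏ signs) · e_{j₀} e_{j_k}ᵀ. -/
noncomputable def pathX (k : ℕ) (n : ℕ → ℕ)
    (A' : ∀ ℓ : ℕ, Matrix (Fin (n ℓ)) (Fin (n (ℓ + 1))) ℝ)
    (d q : Fin (n 0) → ℝ) (i : Fin (n 0)) (j' : Fin (n k))
    (ω : (ℓ : Fin (k + 1)) → Fin (n ℓ.val)) : ℝ :=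
  d (ω ⟨0, Nat.succ_pos k⟩) / q (ω ⟨0, Nat.succ_pos k⟩) *
    (∏ ℓ : Fin k, rwSign (A' ℓ (ω ℓ.castSucc) (ω ℓ.succ))) *
    (if i = ω ⟨0, Nat.succ_pos k⟩ ∧ j' = ω ⟨k, Nat.lt_succ_self k⟩ then 1 else 0)

theorem sum_paths_prod_mul_eq_sum_leftProd (n : ℕ → ℕ)
    (A : ∀ ℓ : ℕ, Matrix (Fin (n ℓ)) (Fin (n (ℓ + 1))) ℝ) (k : ℕ)
    (F : Fin (n 0) → Fin (n k) → ℝ) :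
    ∑ ω : (ℓ : Fin (k + 1)) → Fin (n ℓ.val),
        (∏ ℓ : Fin k, A ℓ (ω ℓ.castSucc) (ω ℓ.succ)) *
          F (ω ⟨0, Nat.succ_pos k⟩) (ω ⟨k, Nat.lt_succ_self k⟩) =
      ∑ i, ∑ j, leftProd n A k i j * F i j := by
  induction k with
  | zero =>
    simp only [leftProd, Matrix.one_apply, ite_mul, one_mul, zero_mul, Finset.sum_ite_eq,
      Finset.mem_univ, if_true, Finset.univ_eq_empty, Finset.prod_empty]
    exact Fintype.sum_equiv (Equiv.piUnique fun ℓ : Fin 1 => Fin (n ℓ.val)) _ _ fun ω => rfl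
  | succ k ih =>
    rw [← (Fin.snocEquiv (fun ℓ : Fin (k + 2) => Fin (n ℓ.val))).sum_comp,
      Fintype.sum_prod_type_right]
    have hfirst (p : (ℓ : Fin (k + 1)) → Fin (n ℓ.val)) (x : Fin (n (k + 1))) :
        Fin.snoc (α := fun ℓ : Fin (k + 2) => Fin (n ℓ.val)) p x ⟨0, Nat.succ_pos (k + 1)⟩ =
          p ⟨0, Nat.succ_pos k⟩ :=
      Fin.snoc_castSucc (α := fun ℓ : Fin (k + 2) => Fin (n ℓ.val)) x p 0
    have hlast (p : (ℓ : Fin (k + 1)) → Fin (n ℓ.val)) (x : Fin (n (k + 1))) :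
        Fin.snoc (α := fun ℓ : Fin (k + 2) => Fin (n ℓ.val)) p x
          ⟨k + 1, Nat.lt_succ_self (k + 1)⟩ = x :=
      Fin.snoc_last (α := fun ℓ : Fin (k + 2) => Fin (n ℓ.val)) x p
    simp only [Fin.snocEquiv, Equiv.coe_fn_mk, Fin.prod_univ_castSucc, Fin.succ_castSucc,
      Fin.succ_last, Fin.snoc_castSucc, Fin.snoc_last, hfirst, hlast]
    calc _ = ∑ ω : (ℓ : Fin (k + 1)) → Fin (n ℓ.val),
            (∏ ℓ : Fin k, A ℓ (ω ℓ.castSucc) (ω ℓ.succ)) *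
              ∑ j, A k (ω ⟨k, Nat.lt_succ_self k⟩) j * F (ω ⟨0, Nat.succ_pos k⟩) j := by
          simp only [Finset.mul_sum, mul_assoc]
          -- the indices `↑ℓ.castSucc`, `↑(Fin.last k)` agree with `↑ℓ`, `k` only definitionally
          rfl
      _ = ∑ i, ∑ j, leftProd n A k i j * ∑ x, A k j x * F i x :=
          ih fun i j => ∑ x, A k j x * F i x
      _ = _ := by
          simp only [leftProd, Matrix.mul_apply, Finset.mul_sum, Finset.sum_mul, mul_assoc]
          exact Finset.sum_congr rfl fun i _ => Finset.sum_comm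

theorem abs_mul_rwSign (a : ℝ) : |a| * rwSign a = a := by
  unfold rwSign
  split_ifs with h
  · rw [abs_of_nonneg h, mul_one]
  · rw [abs_of_neg (not_le.mp h), neg_mul_neg, mul_one]

theorem pathProb_mul_pathX (k : ℕ) (n : ℕ → ℕ)
    (A' : ∀ ℓ : ℕ, Matrix (Fin (n ℓ)) (Fin (n (ℓ + 1))) ℝ) (d q : Fin (n 0) → ℝ)
    (hqd : ∀ m, q m = 0 → d m = 0) (i : Fin (n 0)) (j' : Fin (n k))
    (ω : (ℓ : Fin (k + 1)) → Fin (n ℓ.val)) :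
    pathProb k n A' q ω * pathX k n A' d q i j' ω =
      (∏ ℓ : Fin k, A' ℓ (ω ℓ.castSucc) (ω ℓ.succ)) *
        Matrix.single i j' (d i) (ω ⟨0, Nat.succ_pos k⟩) (ω ⟨k, Nat.lt_succ_self k⟩) := by
  have hweight := mul_div_cancel_of_imp' (hqd (ω ⟨0, Nat.succ_pos k⟩))
  have hsigned : (∏ ℓ : Fin k, |A' ℓ (ω ℓ.castSucc) (ω ℓ.succ)|) *
      ∏ ℓ : Fin k, rwSign (A' ℓ (ω ℓ.castSucc) (ω ℓ.succ)) =
        ∏ ℓ : Fin k, A' ℓ (ω ℓ.castSucc) (ω ℓ.succ) := by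
    rw [← Finset.prod_mul_distrib]
    exact Finset.prod_congr rfl fun ℓ _ => abs_mul_rwSign _
  rw [Matrix.single_apply]
  unfold pathProb pathX
  split_ifs with h
  · rw [h.1]
    linear_combination (∏ ℓ : Fin k, |A' ℓ (ω ℓ.castSucc) (ω ℓ.succ)|) *
      (∏ ℓ : Fin k, rwSign (A' ℓ (ω ℓ.castSucc) (ω ℓ.succ))) * hweight +
      d (ω ⟨0, Nat.succ_pos k⟩) * hsigned
  · ring

theorem random_walk_estimator_mean_general (k : ℕ) (n : ℕ → ℕ)
    (A' : ∀ ℓ : ℕ, Matrix (Fin (n ℓ)) (Fin (n (ℓ + 1))) ℝ)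
    (d : Fin (n 0) → ℝ) (hd : ∀ i, 0 ≤ d i)
    (q : Fin (n 0) → ℝ)
    (hqd : ∀ i, 0 < d i → 0 < q i) :
    ∀ (i : Fin (n 0)) (j' : Fin (n k)),
      (∑ ω : (ℓ : Fin (k + 1)) → Fin (n ℓ.val),
          pathProb k n A' q ω * pathX k n A' d q i j' ω) =
        (Matrix.diagonal d * leftProd n A' k) i j' := by
  intro i j'
  have hsupp (m : Fin (n 0)) (hm : q m = 0) : d m = 0 :=
    ((hd m).eq_of_not_lt fun hpos => (hqd m hpos).ne' hm).symm
  calc _ = ∑ ω : (ℓ : Fin (k + 1)) → Fin (n ℓ.val),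
          (∏ ℓ : Fin k, A' ℓ (ω ℓ.castSucc) (ω ℓ.succ)) *
            Matrix.single i j' (d i) (ω ⟨0, Nat.succ_pos k⟩) (ω ⟨k, Nat.lt_succ_self k⟩) :=
        Finset.sum_congr rfl fun ω _ => pathProb_mul_pathX k n A' d q hsupp i j' ω
    _ = ∑ a, ∑ b, leftProd n A' k a b * Matrix.single i j' (d i) a b :=
        sum_paths_prod_mul_eq_sum_leftProd n A' k _
    _ = leftProd n A' k i j' * d i := by
        simp only [Matrix.single_apply, ite_and, mul_ite, mul_zero, Finset.sum_ite_irrel,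
          Finset.sum_ite_eq, Finset.mem_univ, ↓reduceIte, Finset.sum_const_zero]
    _ = _ := by rw [Matrix.diagonal_mul, mul_comm]

/-- Random walk estimator: E[X] = D₀ A'₁ ⋯ A'_k (entrywise). -/
theorem random_walk_estimator_mean (k : ℕ) (n : ℕ → ℕ)
    (A' : ∀ ℓ : ℕ, Matrix (Fin (n ℓ)) (Fin (n (ℓ + 1))) ℝ)
    (hrow : ∀ ℓ < k, ∀ i, ∑ j, |A' ℓ i j| = 1)
    (d : Fin (n 0) → ℝ) (hd : ∀ i, 0 ≤ d i)
    (q : Fin (n 0) → ℝ) (hq0 : ∀ i, 0 ≤ q i) (hq1 : ∑ i, q i = 1)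
    (hqd : ∀ i, 0 < d i → 0 < q i) :
    ∀ (i : Fin (n 0)) (j' : Fin (n k)),
      (∑ ω : (ℓ : Fin (k + 1)) → Fin (n ℓ.val),
          pathProb k n A' q ω * pathX k n A' d q i j' ω) =
        (Matrix.diagonal d * leftProd n A' k) i j' :=
  random_walk_estimator_mean_general k n A' d hd q hqd
end

section
/- In the random-walk estimator for a matrix product (with X(j₀,...,j_k) = (d₀)_{j₀}/q_{j₀} · s(j₀,...,j_k) · e_{j₀} e_{j_k}ᵀ as defined), each entry satisfies Var[X_{ij}] ≤ ((d₀)_i / q_i) · [Ā₁⋯Ā_k]_{ij}, where Ā_ℓ denotes the entrywise absolute values of A_ℓ = the ℓ-th factor before normalization. -/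
open scoped BigOperators

/-!
The variance is at most the second moment. The signs square to `1`, so on a path from `i`
to `j` the estimator squares to `(dᵢ/qᵢ)²`, while the path has probability `qᵢ ∏ |A'_ℓ|`.
Summing over paths therefore gives `(dᵢ/qᵢ) · dᵢ · [|A'₀|⋯|A'_{k-1}|]ᵢⱼ`, the sum over paths of
the products of their entries being the entries of the matrix product.
-/

open Matrix

section

variable {n : ℕ → ℕ}

noncomputable def pathWeight (B : ∀ ℓ : ℕ, Matrix (Fin (n ℓ)) (Fin (n (ℓ + 1))) ℝ) (k : ℕ)
    (ω : (ℓ : Fin (k + 1)) → Fin (n ℓ.val)) : ℝ :=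
  ∏ ℓ : Fin k, B ℓ (ω ℓ.castSucc) (ω ℓ.succ)

lemma pathWeight_snoc (B : ∀ ℓ : ℕ, Matrix (Fin (n ℓ)) (Fin (n (ℓ + 1))) ℝ) (k : ℕ)
    (ω : (ℓ : Fin (k + 1)) → Fin (n ℓ.val)) (x : Fin (n (k + 1))) :
    pathWeight B (k + 1) (Fin.snoc (α := fun ℓ : Fin (k + 2) => Fin (n ℓ.val)) ω x) =
      pathWeight B k ω * B k (ω (Fin.last k)) x := by
  simp only [pathWeight, Fin.prod_univ_castSucc, Fin.succ_castSucc, Fin.snoc_castSucc,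
    Fin.succ_last, Fin.snoc_last, Fin.val_castSucc, Fin.val_last]

lemma sum_pathWeight_eq_leftProd_mulVec (B : ∀ ℓ : ℕ, Matrix (Fin (n ℓ)) (Fin (n (ℓ + 1))) ℝ)
    (k : ℕ) (i : Fin (n 0)) (g : Fin (n k) → ℝ) :
    ∑ ω : (ℓ : Fin (k + 1)) → Fin (n ℓ.val),
      (if i = ω ⟨0, k.succ_pos⟩ then pathWeight B k ω * g (ω (Fin.last k)) else 0) =
        (leftProd n B k *ᵥ g) i := by
  induction k with
  | zero =>
    rw [← (Fin.snocEquiv _).sum_comp, Fintype.sum_prod_type]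
    simp only [Fin.snocEquiv, Equiv.coe_fn_mk, Fin.snoc_last]
    have snoc_start : ∀ ω x,
        Fin.snoc (α := fun ℓ : Fin 1 => Fin (n ℓ.val)) ω x ⟨0, Nat.succ_pos 0⟩ = x :=
      fun _ _ => rfl
    simp only [snoc_start]
    simp [pathWeight, leftProd]
  | succ k ih =>
    rw [← (Fin.snocEquiv _).sum_comp, Fintype.sum_prod_type, Finset.sum_comm]
    simp only [Fin.snocEquiv, Equiv.coe_fn_mk, pathWeight_snoc, Fin.snoc_last]
    have snoc_start : ∀ ω x,
        Fin.snoc (α := fun ℓ : Fin (k + 2) => Fin (n ℓ.val)) ω x ⟨0, (k + 1).succ_pos⟩ =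
          ω ⟨0, k.succ_pos⟩ :=
      fun ω x => Fin.snoc_castSucc (α := fun ℓ : Fin (k + 2) => Fin (n ℓ.val)) x ω ⟨0, k.succ_pos⟩
    have sum_last_step : ∀ ω : (ℓ : Fin (k + 1)) → Fin (n ℓ.val),
        ∑ x, (if i = ω ⟨0, k.succ_pos⟩ then
          pathWeight B k ω * B k (ω (Fin.last k)) x * g x else 0) =
        if i = ω ⟨0, k.succ_pos⟩ then pathWeight B k ω * (B k *ᵥ g) (ω (Fin.last k)) else 0 := by
      intro ω
      split_ifs <;> simp [mulVec, dotProduct, Finset.mul_sum, mul_assoc]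
    simp only [snoc_start]
    refine (Finset.sum_congr rfl fun ω _ => sum_last_step ω).trans ?_
    rw [ih, leftProd, mulVec_mulVec]

lemma sum_pathWeight_eq_leftProd_apply (B : ∀ ℓ : ℕ, Matrix (Fin (n ℓ)) (Fin (n (ℓ + 1))) ℝ)
    (k : ℕ) (i : Fin (n 0)) (j : Fin (n k)) :
    ∑ ω : (ℓ : Fin (k + 1)) → Fin (n ℓ.val),
      (if i = ω ⟨0, k.succ_pos⟩ ∧ j = ω ⟨k, k.lt_succ_self⟩ then pathWeight B k ω else 0) =
        leftProd n B k i j := by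
  rw [← col_apply (leftProd n B k) j i, ← mulVec_single_one, ← sum_pathWeight_eq_leftProd_mulVec]
  refine Finset.sum_congr rfl fun ω _ => ?_
  simp only [ite_and, Pi.single_apply, eq_comm (a := j), mul_ite, mul_one, mul_zero]
  rfl

lemma rwSign_sq (x : ℝ) : rwSign x ^ 2 = 1 := by
  unfold rwSign
  split_ifs <;> norm_num

lemma mul_div_sq_eq_div_mul {K : Type*} [Field K] (a b : K) : b * (a / b) ^ 2 = a / b * a := by
  rcases eq_or_ne b 0 with rfl | hb
  · simp
  · field_simp

lemma pathProb_mul_pathX_sq (k : ℕ) (A' : ∀ ℓ : ℕ, Matrix (Fin (n ℓ)) (Fin (n (ℓ + 1))) ℝ)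
    (d q : Fin (n 0) → ℝ) (i : Fin (n 0)) (j : Fin (n k))
    (ω : (ℓ : Fin (k + 1)) → Fin (n ℓ.val)) :
    pathProb k n A' q ω * pathX k n A' d q i j ω ^ 2 =
      d i / q i * (d i * if i = ω ⟨0, k.succ_pos⟩ ∧ j = ω ⟨k, k.lt_succ_self⟩ then
        pathWeight (fun ℓ => (A' ℓ).map (fun x => |x|)) k ω else 0) := by
  by_cases hpath : i = ω ⟨0, k.succ_pos⟩ ∧ j = ω ⟨k, k.lt_succ_self⟩
  · have hsign : (∏ ℓ : Fin k, rwSign (A' ℓ (ω ℓ.castSucc) (ω ℓ.succ))) ^ 2 = 1 := by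
      simp only [← Finset.prod_pow, rwSign_sq, Finset.prod_const_one]
    have hprob : pathProb k n A' q ω =
        q i * pathWeight (fun ℓ => (A' ℓ).map (fun x => |x|)) k ω := by
      rw [hpath.1]
      rfl
    rw [pathX, if_pos hpath, if_pos hpath, ← hpath.1, hprob, mul_one, mul_pow, hsign, mul_one]
    linear_combination
      pathWeight (fun ℓ => (A' ℓ).map (fun x => |x|)) k ω * mul_div_sq_eq_div_mul (d i) (q i)
  · simp only [pathX, if_neg hpath]
    ring

lemma sum_pathProb_mul_pathX_sq (k : ℕ) (A' : ∀ ℓ : ℕ, Matrix (Fin (n ℓ)) (Fin (n (ℓ + 1))) ℝ)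
    (d q : Fin (n 0) → ℝ) (i : Fin (n 0)) (j : Fin (n k)) :
    ∑ ω : (ℓ : Fin (k + 1)) → Fin (n ℓ.val), pathProb k n A' q ω * pathX k n A' d q i j ω ^ 2 =
      d i / q i * (diagonal d * leftProd n (fun ℓ => (A' ℓ).map (fun x => |x|)) k) i j := by
  simp only [pathProb_mul_pathX_sq, ← Finset.mul_sum, sum_pathWeight_eq_leftProd_apply,
    diagonal_mul]

end

theorem random_walk_estimator_variance_general (k : ℕ) (n : ℕ → ℕ)
    (A' : ∀ ℓ : ℕ, Matrix (Fin (n ℓ)) (Fin (n (ℓ + 1))) ℝ)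
    (d : Fin (n 0) → ℝ)
    (q : Fin (n 0) → ℝ) :
    ∀ (i : Fin (n 0)) (j' : Fin (n k)),
      (∑ ω : (ℓ : Fin (k + 1)) → Fin (n ℓ.val),
          pathProb k n A' q ω * (pathX k n A' d q i j' ω) ^ 2) -
        (∑ ω : (ℓ : Fin (k + 1)) → Fin (n ℓ.val),
            pathProb k n A' q ω * pathX k n A' d q i j' ω) ^ 2 ≤
      d i / q i *
        (Matrix.diagonal d * leftProd n (fun ℓ => (A' ℓ).map (fun x => |x|)) k) i j' := by
  intro i j'
  rw [sum_pathProb_mul_pathX_sq]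
  exact sub_le_self _ (sq_nonneg _)

/-- Random walk estimator: Var[X_{ij}] ≤ ((d₀)_i / q_i) · [Ā₁⋯Ā_k]_{ij}, where
    Ā₁⋯Ā_k = diag(d₀) · |A'₁|⋯|A'_k| via the stochastic decomposition. -/
theorem random_walk_estimator_variance (k : ℕ) (n : ℕ → ℕ)
    (A' : ∀ ℓ : ℕ, Matrix (Fin (n ℓ)) (Fin (n (ℓ + 1))) ℝ)
    (hrow : ∀ ℓ < k, ∀ i, ∑ j, |A' ℓ i j| = 1)
    (d : Fin (n 0) → ℝ) (hd : ∀ i, 0 ≤ d i)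
    (q : Fin (n 0) → ℝ) (hq0 : ∀ i, 0 ≤ q i) (hq1 : ∑ i, q i = 1)
    (hqd : ∀ i, 0 < d i → 0 < q i) :
    ∀ (i : Fin (n 0)) (j' : Fin (n k)),
      (∑ ω : (ℓ : Fin (k + 1)) → Fin (n ℓ.val),
          pathProb k n A' q ω * (pathX k n A' d q i j' ω) ^ 2) -
        (∑ ω : (ℓ : Fin (k + 1)) → Fin (n ℓ.val),
            pathProb k n A' q ω * pathX k n A' d q i j' ω) ^ 2 ≤
      d i / q i *
        (Matrix.diagonal d * leftProd n (fun ℓ => (A' ℓ).map (fun x => |x|)) k) i j' :=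
  random_walk_estimator_variance_general k n A' d q
end

section
/- For the tug-of-war (Rademacher) sketch s with i.i.d. uniform ±1 entries, the matrix-valued random variable A s sᵀ B (A ∈ ℝ^{m×n}, B ∈ ℝ^{n×p}) has Tr[Σ] = ‖A‖_F²·‖B‖_F² + ‖AB‖_F² − 2·Σ_{k=1}^n ‖A_{•k}‖₂²·‖B_{k•}‖₂², where A_{•k} is the k-th column of A and B_{k•} the k-th row of B. -/
open scoped BigOperators

/-- The sign vector determined by ω ∈ {0,1}ⁿ. -/
noncomputable def radSign {n : ℕ} (ω : Fin n → Bool) (t : Fin n) : ℝ :=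
  if ω t then 1 else -1

/-- Expectation over the uniform distribution on {0,1}ⁿ. -/
noncomputable def radE {n : ℕ} (f : (Fin n → Bool) → ℝ) : ℝ :=
  ∑ ω : Fin n → Bool, ((1 : ℝ) / 2) ^ n * f ω

/-- The (i,j) entry of A s sᵀ B for the sign vector s = radSign ω. -/
noncomputable def sketchEntry {m n p : ℕ} (A : Matrix (Fin m) (Fin n) ℝ)
    (B : Matrix (Fin n) (Fin p) ℝ) (ω : Fin n → Bool) (i : Fin m) (j : Fin p) : ℝ :=
  ∑ k, ∑ l, A i k * radSign ω k * radSign ω l * B l j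

/-!
Write the `(i, j)` entry of `A s sᵀ B` as `∑ k, ∑ l, A i k * B l j * (s k * s l)`. Its variance is
the quadratic form of these coefficients in the covariances
`Cov[s k * s l, s k' * s l'] = (δ k k' δ l l' + δ k l' δ l k') (1 - δ k l)`, which all follow from
`E[s k * f] = 0` for every `f` not depending on `s k`. Evaluating the quadratic form gives
`‖A i •‖² ‖B • j‖² + (A * B) i j ^ 2 - 2 ∑ k, A i k ^ 2 * B k j ^ 2`, and summing over `i, j`
gives the formula.
-/

open Finset

noncomputable def radCov {n : ℕ} (f g : (Fin n → Bool) → ℝ) : ℝ :=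
  radE (fun ω => f ω * g ω) - radE f * radE g

noncomputable def radVar {n : ℕ} (f : (Fin n → Bool) → ℝ) : ℝ :=
  radE (fun ω => f ω ^ 2) - radE f ^ 2

section radE

variable {n : ℕ}

lemma radE_sum {ι : Type*} (S : Finset ι) (f : ι → (Fin n → Bool) → ℝ) :
    radE (fun ω => ∑ x ∈ S, f x ω) = ∑ x ∈ S, radE (f x) := by
  simp only [radE, mul_sum]
  exact sum_comm

lemma radE_const_mul (c : ℝ) (f : (Fin n → Bool) → ℝ) :
    radE (fun ω => c * f ω) = c * radE f := by
  simp only [radE, mul_sum]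
  exact sum_congr rfl fun ω _ => by ring

lemma radE_const (c : ℝ) : radE (fun _ : Fin n → Bool => c) = c := by
  simp [radE]

lemma radE_neg (f : (Fin n → Bool) → ℝ) : radE (fun ω => -f ω) = -radE f := by
  simpa using radE_const_mul (-1) f

end radE

section radSign

variable {n : ℕ}

lemma radSign_mul_self (ω : Fin n → Bool) (k : Fin n) : radSign ω k * radSign ω k = 1 := by
  unfold radSign; split_ifs <;> norm_num

lemma radSign_update_self (ω : Fin n → Bool) (k : Fin n) :
    radSign (Function.update ω k (!ω k)) k = -radSign ω k := by
  unfold radSign; cases ω k <;> simp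

lemma radSign_update_of_ne {k t : Fin n} (h : t ≠ k) (ω : Fin n → Bool) (b : Bool) :
    radSign (Function.update ω k b) t = radSign ω t := by
  simp [radSign, Function.update_of_ne h]

/-- Flipping the `k`-th coordinate is a bijection of the sample space that negates the integrand. -/
lemma radE_radSign_mul_eq_zero (k : Fin n) {f : (Fin n → Bool) → ℝ}
    (hf : ∀ ω b, f (Function.update ω k b) = f ω) :
    radE (fun ω => radSign ω k * f ω) = 0 := by
  have hflip : Function.Involutive fun ω : Fin n → Bool => Function.update ω k (!ω k) :=
    fun ω => by ext t; by_cases h : t = k <;> simp [h]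
  have h := Equiv.sum_comp hflip.toPerm fun ω => ((1 : ℝ) / 2) ^ n * (radSign ω k * f ω)
  simp only [Function.Involutive.coe_toPerm, radSign_update_self, hf, neg_mul] at h
  have := radE_neg fun ω => radSign ω k * f ω
  simp only [radE] at this ⊢
  linarith

lemma radE_radSign_mul_radSign (k l : Fin n) :
    radE (fun ω => radSign ω k * radSign ω l) = if k = l then 1 else 0 := by
  split_ifs with h
  · subst h; simp only [radSign_mul_self, radE_const]
  · exact radE_radSign_mul_eq_zero k fun ω b => radSign_update_of_ne (Ne.symm h) ω b

lemma radE_radSign_mul_four {k l k' l' : Fin n} (hkl : k ≠ l) (hkl' : k' ≠ l') :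
    radE (fun ω => radSign ω k * radSign ω l * (radSign ω k' * radSign ω l')) =
      (if k = k' then 1 else 0) * (if l = l' then 1 else 0) +
        (if k = l' then 1 else 0) * (if l = k' then 1 else 0) := by
  by_cases hkk' : k = k'
  · subst hkk'
    have h ω : radSign ω k * radSign ω l * (radSign ω k * radSign ω l') =
        radSign ω l * radSign ω l' := by
      linear_combination (radSign ω l * radSign ω l') * radSign_mul_self ω k
    simp [h, radE_radSign_mul_radSign, Ne.symm hkl]
  by_cases hkl'' : k = l'
  · subst hkl''
    have h ω : radSign ω k * radSign ω l * (radSign ω k' * radSign ω k) =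
        radSign ω l * radSign ω k' := by
      linear_combination (radSign ω l * radSign ω k') * radSign_mul_self ω k
    simp [h, radE_radSign_mul_radSign, hkk']
  simp only [hkk', hkl'', if_false, zero_mul, add_zero, mul_assoc]
  refine radE_radSign_mul_eq_zero k fun ω b => ?_
  simp only [radSign_update_of_ne (Ne.symm hkl), radSign_update_of_ne (Ne.symm hkk'),
    radSign_update_of_ne (Ne.symm hkl'')]

end radSign

lemma radCov_radSign_mul_radSign {n : ℕ} (k l k' l' : Fin n) :
    radCov (fun ω => radSign ω k * radSign ω l) (fun ω => radSign ω k' * radSign ω l') =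
      ((if k = k' then 1 else 0) * (if l = l' then 1 else 0) +
        (if k = l' then 1 else 0) * (if l = k' then 1 else 0)) * (1 - if k = l then 1 else 0) := by
  unfold radCov
  by_cases hkl : k = l
  · subst hkl; simp [radSign_mul_self, radE_const]
  by_cases hkl' : k' = l'
  · subst hkl'
    have : ¬(k = k' ∧ l = k') := fun h => hkl (h.1.trans h.2.symm)
    simp only [radSign_mul_self, mul_one, radE_const, sub_self]
    split_ifs <;> simp_all
  simp [radE_radSign_mul_four hkl hkl', radE_radSign_mul_radSign, hkl, hkl']

lemma radVar_sum_mul {n : ℕ} {ι : Type*} (S : Finset ι) (c : ι → ℝ)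
    (f : ι → (Fin n → Bool) → ℝ) :
    radVar (fun ω => ∑ x ∈ S, c x * f x ω) =
      ∑ x ∈ S, ∑ y ∈ S, c x * c y * radCov (f x) (f y) := by
  have h ω : (∑ x ∈ S, c x * f x ω) ^ 2 = ∑ x ∈ S, ∑ y ∈ S, c x * c y * (f x ω * f y ω) := by
    rw [sq, sum_mul_sum]
    exact sum_congr rfl fun x _ => sum_congr rfl fun y _ => by ring
  simp only [radVar, radCov, h, radE_sum, radE_const_mul, sq, sum_mul_sum, mul_sub,
    sum_sub_distrib]
  congr 1
  exact sum_congr rfl fun x _ => sum_congr rfl fun y _ => by ring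

lemma radVar_bilinear {n : ℕ} (a b : Fin n → ℝ) :
    radVar (fun ω => ∑ k, ∑ l, a k * radSign ω k * radSign ω l * b l) =
      (∑ k, a k ^ 2) * (∑ l, b l ^ 2) + (∑ k, a k * b k) ^ 2 - 2 * ∑ k, a k ^ 2 * b k ^ 2 := by
  have pairs ω : ∑ k, ∑ l, a k * radSign ω k * radSign ω l * b l =
      ∑ x : Fin n × Fin n, a x.1 * b x.2 * (radSign ω x.1 * radSign ω x.2) := by
    rw [Fintype.sum_prod_type]
    exact sum_congr rfl fun k _ => sum_congr rfl fun l _ => by ring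
  have pairing k l : ∑ k', ∑ l', a k * b l * (a k' * b l') *
      (((if k = k' then 1 else 0) * (if l = l' then 1 else 0) +
        (if k = l' then 1 else 0) * (if l = k' then 1 else 0)) * (1 - if k = l then 1 else 0)) =
      (a k ^ 2 * b l ^ 2 + a k * b k * (a l * b l)) * (1 - if k = l then 1 else 0) := by
    simp only [mul_add, add_mul, ite_mul, mul_ite, one_mul, mul_one, zero_mul, mul_zero,
      sum_add_distrib, sum_ite_eq, sum_ite_irrel, sum_const_zero, mem_univ, if_true]
    ring
  rw [funext pairs, radVar_sum_mul univ (fun x : Fin n × Fin n => a x.1 * b x.2)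
    fun x ω => radSign ω x.1 * radSign ω x.2]
  simp only [radCov_radSign_mul_radSign, Fintype.sum_prod_type, pairing]
  simp only [mul_sub, mul_one, mul_ite, mul_zero, sum_sub_distrib, sum_ite_eq, mem_univ, if_true,
    sum_add_distrib, ← sum_mul_sum, ← sq]
  simp only [mul_pow]
  ring

/-- Tug-of-war sketch: Tr[Σ] = ‖A‖_F²‖B‖_F² + ‖AB‖_F² − 2 Σ_k ‖A_{•k}‖₂²‖B_{k•}‖₂². -/
theorem tug_of_war_trace_covariance {m n p : ℕ}
    (A : Matrix (Fin m) (Fin n) ℝ) (B : Matrix (Fin n) (Fin p) ℝ) :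
    (∑ i, ∑ j,
        (radE (fun ω => (sketchEntry A B ω i j) ^ 2) -
          (radE (fun ω => sketchEntry A B ω i j)) ^ 2)) =
      (∑ i, ∑ k, (A i k) ^ 2) * (∑ k, ∑ j, (B k j) ^ 2) +
        (∑ i, ∑ j, ((A * B) i j) ^ 2) -
        2 * ∑ k, (∑ i, (A i k) ^ 2) * (∑ j, (B k j) ^ 2) := by
  have entry i j : radVar (fun ω => sketchEntry A B ω i j) =
      (∑ k, A i k ^ 2) * (∑ l, B l j ^ 2) + (A * B) i j ^ 2 - 2 * ∑ k, A i k ^ 2 * B k j ^ 2 := by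
    rw [Matrix.mul_apply]
    exact radVar_bilinear (fun k => A i k) fun l => B l j
  have frobenius : ∑ i, ∑ j, (∑ k, A i k ^ 2) * (∑ l, B l j ^ 2) =
      (∑ i, ∑ k, A i k ^ 2) * (∑ k, ∑ j, B k j ^ 2) := by
    rw [← sum_mul_sum]
    exact congrArg _ sum_comm
  have columns_rows : ∑ i, ∑ j, ∑ k, A i k ^ 2 * B k j ^ 2 =
      ∑ k, (∑ i, A i k ^ 2) * (∑ j, B k j ^ 2) := by
    rw [sum_congr rfl fun i _ => sum_comm, sum_comm]
    simp only [sum_mul_sum]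
  change ∑ i, ∑ j, radVar (fun ω => sketchEntry A B ω i j) = _
  simp only [entry, sum_add_distrib, sum_sub_distrib, frobenius]
  rw [← columns_rows]
  simp only [mul_sum]
end

section
/- For the column-sample sketch with probabilities p_k proportional to ‖A_{•k}‖₂·‖B_{k•}‖₂ (assuming all these products are nonzero), Tr[Σ] = (Σ_k ‖A_{•k}‖₂·‖B_{k•}‖₂)² − ‖AB‖_F², and in particular Tr[Σ] ≤ ‖A‖_F²·‖B‖_F² − ‖AB‖_F². -/
open scoped BigOperators

/-- The column-sample sketch vector: s = e_k/√(p_k) with probability p_k. -/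
noncomputable def colSketch {n : ℕ} (p : Fin n → ℝ) (ωk : Fin n) (i : Fin n) : ℝ :=
  if i = ωk then 1 / Real.sqrt (p ωk) else 0

/-- The (i,j) entry of A s sᵀ B for the column-sample sketch. -/
noncomputable def colSketchEntry {m n q : ℕ} (p : Fin n → ℝ)
    (A : Matrix (Fin m) (Fin n) ℝ) (B : Matrix (Fin n) (Fin q) ℝ)
    (ωk : Fin n) (i : Fin m) (j : Fin q) : ℝ :=
  ∑ k, ∑ l, A i k * colSketch p ωk k * colSketch p ωk l * B l j

/-!
The sketch `A s sᵀ B` takes the value `A_{•k} B_{k•} / p_k` with probability `p_k`, so it is an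
unbiased estimator of `AB` whose summed second moments are `∑ₖ ‖A_{•k}‖²‖B_{k•}‖² / p_k`.
With `p_k = w_k / ∑ₗ w_l` each summand becomes `w_k ∑ₗ w_l`, giving `(∑ₖ w_k)²`, and
Cauchy–Schwarz bounds `∑ₖ ‖A_{•k}‖ ‖B_{k•}‖` by `‖A‖_F ‖B‖_F`.
-/

open Finset

section ColumnSketch

variable {m n q : ℕ} {p : Fin n → ℝ} (A : Matrix (Fin m) (Fin n) ℝ) (B : Matrix (Fin n) (Fin q) ℝ)

lemma colSketchEntry_eq_div {ω : Fin n} (hp : 0 ≤ p ω) (i : Fin m) (j : Fin q) :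
    colSketchEntry p A B ω i j = A i ω * B ω j / p ω := by
  simp only [colSketchEntry, colSketch, one_div, mul_ite, mul_zero, ite_mul, zero_mul,
    sum_ite_eq', mem_univ, ↓reduceIte]
  rw [mul_assoc (A i ω), ← mul_inv, Real.mul_self_sqrt hp, div_eq_mul_inv]
  ring

lemma sum_mul_colSketchEntry (hp : ∀ k, 0 < p k) (i : Fin m) (j : Fin q) :
    ∑ ω, p ω * colSketchEntry p A B ω i j = (A * B) i j := by
  rw [Matrix.mul_apply]
  refine sum_congr rfl fun ω _ => ?_
  rw [colSketchEntry_eq_div A B (hp ω).le, mul_div_cancel₀ _ (hp ω).ne']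

lemma sum_mul_colSketchEntry_sq (hp : ∀ k, 0 ≤ p k) (i : Fin m) (j : Fin q) :
    ∑ ω, p ω * colSketchEntry p A B ω i j ^ 2 = ∑ ω, (A i ω * B ω j) ^ 2 / p ω := by
  refine sum_congr rfl fun ω _ => ?_
  rw [colSketchEntry_eq_div A B (hp ω)]
  rcases (hp ω).eq_or_lt with h | h
  · simp [← h]
  · field_simp

theorem trace_colSketch_covariance (hp : ∀ k, 0 < p k) :
    ∑ i, ∑ j, ((∑ ω, p ω * colSketchEntry p A B ω i j ^ 2) -
        (∑ ω, p ω * colSketchEntry p A B ω i j) ^ 2) =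
      ∑ k, (∑ i, A i k ^ 2) * (∑ j, B k j ^ 2) / p k - ∑ i, ∑ j, (A * B) i j ^ 2 := by
  simp only [sum_mul_colSketchEntry A B hp, sum_mul_colSketchEntry_sq A B fun k => (hp k).le,
    sum_sub_distrib, sub_left_inj]
  simp_rw [mul_pow, sum_mul_sum, sum_div]
  exact (sum_congr rfl fun i _ => sum_comm).trans sum_comm

end ColumnSketch

lemma sum_sq_div_normalize {ι : Type*} (s : Finset ι) {w : ι → ℝ} (hw : ∀ k ∈ s, w k ≠ 0) :
    ∑ k ∈ s, w k ^ 2 / (w k / ∑ l ∈ s, w l) = (∑ k ∈ s, w k) ^ 2 := by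
  rw [sq (∑ k ∈ s, w k), sum_mul]
  refine sum_congr rfl fun k hk => ?_
  rw [div_div_eq_mul_div, sq, mul_assoc, mul_div_cancel_left₀ _ (hw k hk)]

lemma sq_sum_sqrt_mul_sqrt_le {ι : Type*} (s : Finset ι) {f g : ι → ℝ} (hf : ∀ i, 0 ≤ f i)
    (hg : ∀ i, 0 ≤ g i) :
    (∑ i ∈ s, √(f i) * √(g i)) ^ 2 ≤ (∑ i ∈ s, f i) * ∑ i ∈ s, g i := by
  calc (∑ i ∈ s, √(f i) * √(g i)) ^ 2 ≤ (√(∑ i ∈ s, f i) * √(∑ i ∈ s, g i)) ^ 2 :=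
        pow_le_pow_left₀ (by positivity) (Real.sum_sqrt_mul_sqrt_le s hf hg) 2
    _ = (∑ i ∈ s, f i) * ∑ i ∈ s, g i := by
        rw [mul_pow, Real.sq_sqrt (sum_nonneg fun i _ => hf i),
          Real.sq_sqrt (sum_nonneg fun i _ => hg i)]

/-- Column-sample sketch with p_k ∝ ‖A_{•k}‖₂‖B_{k•}‖₂:
    Tr[Σ] = (Σ_k ‖A_{•k}‖₂‖B_{k•}‖₂)² − ‖AB‖_F² ≤ ‖A‖_F²‖B‖_F² − ‖AB‖_F². -/
theorem column_sample_optimal_trace_covariance {m n q : ℕ}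
    (A : Matrix (Fin m) (Fin n) ℝ) (B : Matrix (Fin n) (Fin q) ℝ)
    (w : Fin n → ℝ)
    (hw : ∀ k, w k = Real.sqrt (∑ i, (A i k) ^ 2) * Real.sqrt (∑ j, (B k j) ^ 2))
    (hw0 : ∀ k, w k ≠ 0)
    (p : Fin n → ℝ) (hp : ∀ k, p k = w k / ∑ l, w l) :
    (∑ i, ∑ j,
        ((∑ ω, p ω * (colSketchEntry p A B ω i j) ^ 2) -
          (∑ ω, p ω * colSketchEntry p A B ω i j) ^ 2)) =
      (∑ k, w k) ^ 2 - (∑ i, ∑ j, ((A * B) i j) ^ 2) ∧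
    (∑ i, ∑ j,
        ((∑ ω, p ω * (colSketchEntry p A B ω i j) ^ 2) -
          (∑ ω, p ω * colSketchEntry p A B ω i j) ^ 2)) ≤
      (∑ i, ∑ k, (A i k) ^ 2) * (∑ k, ∑ j, (B k j) ^ 2) -
        ∑ i, ∑ j, ((A * B) i j) ^ 2 := by
  have hw_pos : ∀ k, 0 < w k := fun k =>
    (hw0 k).symm.lt_of_le (hw k ▸ mul_nonneg (Real.sqrt_nonneg _) (Real.sqrt_nonneg _))
  have hp_pos : ∀ k, 0 < p k := fun k =>
    hp k ▸ div_pos (hw_pos k) (sum_pos (fun l _ => hw_pos l) ⟨k, mem_univ k⟩)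
  have hw_sq : ∀ k, (∑ i, A i k ^ 2) * (∑ j, B k j ^ 2) = w k ^ 2 := fun k => by
    rw [hw, mul_pow, Real.sq_sqrt (by positivity), Real.sq_sqrt (by positivity)]
  have hsecond_moment : ∑ k, (∑ i, A i k ^ 2) * (∑ j, B k j ^ 2) / p k = (∑ k, w k) ^ 2 := by
    simp only [hw_sq, hp, sum_sq_div_normalize univ fun k _ => hw0 k]
  rw [trace_colSketch_covariance A B hp_pos, hsecond_moment]
  refine ⟨rfl, sub_le_sub_right ?_ _⟩
  rw [sum_comm (f := fun i k => A i k ^ 2), funext hw]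
  exact sq_sum_sqrt_mul_sqrt_le univ (fun k => by positivity) fun k => by positivity
end

section
/- Let A₁,...,A_k be matrices with A_ℓ ∈ ℝ^{n_{ℓ-1}×n_ℓ}, and let s⁽¹⁾,...,s⁽ᵏ⁻¹⁾ be independent random vectors each with i.i.d. uniform ±1 entries (s⁽ℓ⁾ ∈ ℝ^{n_ℓ}). Then the matrix-valued random variable (∏_{ℓ=1}^{k-1} A_ℓ s⁽ℓ⁾ (s⁽ℓ⁾)ᵀ) A_k has expectation A₁⋯A_k, and the trace of its covariance satisfies Tr[Σ] ≤ 3^k · ‖A₁‖_F² ⋯ ‖A_k‖_F². -/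
open scoped BigOperators

/-- The sketched product A₀ s⁽⁰⁾(s⁽⁰⁾)ᵀ A₁ s⁽¹⁾(s⁽¹⁾)ᵀ ⋯ A_{k-1}, where the sign
    vectors s⁽ℓ⁾ ∈ ℝ^{n_{ℓ+1}} are determined by ω (no sketch after the last factor). -/
noncomputable def sketchProd (k : ℕ) (n : ℕ → ℕ)
    (A : ∀ ℓ : ℕ, Matrix (Fin (n ℓ)) (Fin (n (ℓ + 1))) ℝ)
    (ω : (ℓ : Fin k) → Fin (n (ℓ.val + 1)) → Bool) :
    ∀ m : ℕ, Matrix (Fin (n 0)) (Fin (n m)) ℝ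
  | 0 => 1
  | (m + 1) =>
      sketchProd k n A ω m * A m *
        (if h : m + 1 < k then
          Matrix.vecMulVec (fun t : Fin (n (m + 1)) => if ω ⟨m, by omega⟩ t then (1 : ℝ) else -1)
            (fun t : Fin (n (m + 1)) => if ω ⟨m, by omega⟩ t then (1 : ℝ) else -1)
        else (1 : Matrix (Fin (n (m + 1))) (Fin (n (m + 1))) ℝ))

/-!
Write `s = signVec b` for a uniformly random `b`. Since `𝔼 s sᵀ = 1` and `sketchProd ω m` does
not depend on the sign vectors used after step `m`, averaging out the newest sign vector first
turns `P * A m * s sᵀ` into `P * A m`, so by induction the sketch is unbiased. For the second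
moment, `‖X s sᵀ B‖_F² = ∑ p q, (xₚ ⬝ᵥ s)² (b_q ⬝ᵥ s)²` with `xₚ` the rows of `X` and `b_q` the
columns of `B`, and the fourth-moment identity
`𝔼 (x ⬝ᵥ s)² (y ⬝ᵥ s)² = ‖x‖²‖y‖² + 2 (x ⬝ᵥ y)² - 2 ∑ xᵢ² yᵢ² ≤ 3 ‖x‖²‖y‖²` (Cauchy–Schwarz)
costs a factor `3` per sketch. The trace of the covariance is at most the second moment.
-/

open Finset Matrix Function

namespace Matrix

variable {κ α β γ R : Type*}

lemma expect_apply [AddCommMonoid R] [Module ℚ≥0 R] (s : Finset κ) (f : κ → Matrix α β R)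
    (i : α) (j : β) : (𝔼 a ∈ s, f a) i j = 𝔼 a ∈ s, f a i j := by
  simp [Finset.expect, Matrix.sum_apply]

variable [Fintype β] [Semiring R] [Module ℚ≥0 R]

lemma expect_mul [IsScalarTower ℚ≥0 R R] (s : Finset κ) (f : κ → Matrix α β R)
    (B : Matrix β γ R) : (𝔼 a ∈ s, f a) * B = 𝔼 a ∈ s, f a * B := by
  simp [Finset.expect, Matrix.smul_mul, Matrix.sum_mul]

lemma mul_expect [SMulCommClass ℚ≥0 R R] (s : Finset κ) (X : Matrix α β R)
    (f : κ → Matrix β γ R) : X * 𝔼 a ∈ s, f a = 𝔼 a ∈ s, X * f a := by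
  simp [Finset.expect, Matrix.mul_smul, Matrix.mul_sum]

end Matrix

lemma expect_sq_sub_expect_le {α : Type*} [Fintype α] [Nonempty α] (f : α → ℝ) :
    𝔼 a, (f a - 𝔼 b, f b) ^ 2 ≤ 𝔼 a, f a ^ 2 := by
  set c := 𝔼 b, f b
  have hexpand : 𝔼 a, (f a - c) ^ 2 = 𝔼 a, f a ^ 2 - c ^ 2 := by
    simp_rw [sub_sq, expect_add_distrib, expect_sub_distrib, ← Finset.expect_mul,
      ← Finset.mul_expect, Fintype.expect_const]
    ring
  linarith [hexpand, sq_nonneg c]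

def frobeniusNormSq {α β : Type*} [Fintype α] [Fintype β] (M : Matrix α β ℝ) : ℝ :=
  ∑ i, ∑ j, M i j ^ 2

lemma frobeniusNormSq_nonneg {α β : Type*} [Fintype α] [Fintype β] (M : Matrix α β ℝ) :
    0 ≤ frobeniusNormSq M := by
  unfold frobeniusNormSq; positivity

lemma expect_frobeniusNormSq_sub_expect_le {κ α β : Type*} [Fintype κ] [Nonempty κ] [Fintype α]
    [Fintype β] (P : κ → Matrix α β ℝ) :
    𝔼 a, frobeniusNormSq (P a - 𝔼 b, P b) ≤ 𝔼 a, frobeniusNormSq (P a) := by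
  simp only [frobeniusNormSq, expect_sum_comm, Matrix.sub_apply, Matrix.expect_apply]
  exact sum_le_sum fun i _ => sum_le_sum fun j _ => expect_sq_sub_expect_le fun a => P a i j

lemma expect_eval_eq_expect_expect {κ : Type*} [Fintype κ] [DecidableEq κ] {τ : κ → Type*}
    [∀ ℓ, Fintype (τ ℓ)] {M : Type*} [AddCommMonoid M] [Module ℚ≥0 M] (m : κ) [Nonempty (τ m)]
    (K : (∀ ℓ, τ ℓ) → τ m → M) (hK : ∀ ω c b, K (update ω m c) b = K ω b) :
    𝔼 ω, K ω (ω m) = 𝔼 ω, 𝔼 b, K ω b := by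
  -- `(ω, b) ↦ (update ω m b, ω m)` is an involution of the product carrying `K ω b` to
  -- `K ω' (ω' m)`
  have swap : Involutive fun p : (∀ ℓ, τ ℓ) × τ m => (update p.1 m p.2, p.1 m) := fun p => by simp
  calc 𝔼 ω, K ω (ω m) = 𝔼 p : (∀ ℓ, τ ℓ) × τ m, K p.1 (p.1 m) := by
        rw [← univ_product_univ, expect_product' univ univ fun ω _ => K ω (ω m)]
        simp
    _ = 𝔼 p : (∀ ℓ, τ ℓ) × τ m, K p.1 p.2 :=
        Fintype.expect_equiv swap.toPerm _ _ fun p => by simp [hK]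
    _ = 𝔼 ω, 𝔼 b, K ω b := by rw [← univ_product_univ, expect_product']

section Rademacher

variable {ι : Type*}

def signVec (b : ι → Bool) : ι → ℝ := fun t => if b t then 1 else -1

lemma signVec_mul_self (b : ι → Bool) (t : ι) : signVec b t * signVec b t = 1 := by
  unfold signVec; split_ifs <;> norm_num

variable [Fintype ι] [DecidableEq ι]

lemma expect_signVec_mul_eq_zero (t : ι) (f : (ι → Bool) → ℝ)
    (hf : ∀ b v, f (update b t v) = f b) :
    𝔼 b, signVec b t * f b = 0 := by
  have flip : Involutive fun b : ι → Bool => update b t (!b t) := fun b => by simp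
  have := Fintype.expect_equiv flip.toPerm (fun b => signVec b t * f b)
    (fun b => -(signVec b t * f b)) fun b => by
      simp only [Involutive.coe_toPerm, hf, signVec, update_self]
      cases b t <;> norm_num
  rw [Finset.expect_neg_distrib] at this
  linarith

lemma expect_signVec_mul_signVec (i j : ι) :
    𝔼 b, signVec b i * signVec b j = if i = j then 1 else 0 := by
  split_ifs with hij
  · simp [hij, signVec_mul_self]
  · exact expect_signVec_mul_eq_zero i _ fun b v => by simp [signVec, update_of_ne (Ne.symm hij)]

lemma expect_vecMulVec_signVec :
    𝔼 b, vecMulVec (signVec b) (signVec b) = (1 : Matrix ι ι ℝ) := by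
  ext i j
  simp [Matrix.expect_apply, vecMulVec_apply, expect_signVec_mul_signVec, one_apply]

lemma expect_signVec_sq_mul_mul (i c d : ι) :
    𝔼 b, signVec b i * signVec b i * signVec b c * signVec b d = if c = d then 1 else 0 := by
  simp only [signVec_mul_self, one_mul, expect_signVec_mul_signVec]

lemma expect_signVec_mul_four (i j k l : ι) :
    𝔼 b, signVec b i * signVec b j * signVec b k * signVec b l =
      (if i = j then 1 else 0) * (if k = l then 1 else 0) +
      (if i = k then 1 else 0) * (if j = l then 1 else 0) +
      (if i = l then 1 else 0) * (if j = k then 1 else 0) -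
      2 * (if i = j ∧ j = k ∧ k = l then 1 else 0) := by
  by_cases hij : i = j
  · subst hij
    rw [expect_signVec_sq_mul_mul]
    rcases eq_or_ne k l with rfl | hkl <;> rcases eq_or_ne i k with rfl | hik <;> norm_num [*]
  by_cases hik : i = k
  · subst hik
    simp_rw [fun b => show signVec b i * signVec b j * signVec b i * signVec b l =
      signVec b i * signVec b i * signVec b j * signVec b l by ring, expect_signVec_sq_mul_mul]
    rcases eq_or_ne j l with rfl | hjl <;> norm_num [hij, Ne.symm hij, *]
  by_cases hil : i = l
  · subst hil
    simp_rw [fun b => show signVec b i * signVec b j * signVec b k * signVec b i =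
      signVec b i * signVec b i * signVec b j * signVec b k by ring, expect_signVec_sq_mul_mul]
    rcases eq_or_ne j k with rfl | hjk <;> norm_num [Ne.symm hij, Ne.symm hik, *]
  · simp_rw [mul_assoc]
    rw [expect_signVec_mul_eq_zero i _ fun b v => by
      simp [signVec, update_of_ne (Ne.symm hij), update_of_ne (Ne.symm hik),
        update_of_ne (Ne.symm hil)]]
    simp [hij, hik, hil]

lemma expect_sq_dotProduct_signVec_mul_sq (x y : ι → ℝ) :
    𝔼 b, (x ⬝ᵥ signVec b) ^ 2 * (y ⬝ᵥ signVec b) ^ 2 =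
      (∑ i, x i ^ 2) * (∑ i, y i ^ 2) + 2 * (∑ i, x i * y i) ^ 2 -
        2 * ∑ i, x i ^ 2 * y i ^ 2 := by
  have expand : ∀ b, (x ⬝ᵥ signVec b) ^ 2 * (y ⬝ᵥ signVec b) ^ 2 =
      ∑ i, ∑ k, ∑ j, ∑ l, x i * x j * y k * y l *
        (signVec b i * signVec b j * signVec b k * signVec b l) := fun b => by
    simp only [dotProduct, sq, sum_mul_sum]
    refine sum_congr rfl fun i _ => sum_congr rfl fun k _ =>
      sum_congr rfl fun j _ => sum_congr rfl fun l _ => by ring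
  simp_rw [expand, expect_sum_comm, ← Finset.mul_expect, expect_signVec_mul_four]
  simp only [mul_ite, mul_one, mul_zero, ite_and, mul_sub, mul_add, sum_sub_distrib,
    sum_add_distrib, sum_ite_eq, mem_univ, ↓reduceIte, sum_ite_irrel, sum_const_zero, sum_ite_eq']
  rw [sum_mul_sum, sq, sum_mul_sum]
  simp only [mul_sum, ← sum_add_distrib, ← sum_sub_distrib]
  refine sum_congr rfl fun i _ => ?_
  congr 1
  · exact sum_congr rfl fun j _ => by ring
  · ring

lemma expect_sq_dotProduct_signVec_mul_sq_le (x y : ι → ℝ) :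
    𝔼 b, (x ⬝ᵥ signVec b) ^ 2 * (y ⬝ᵥ signVec b) ^ 2 ≤ 3 * ((∑ i, x i ^ 2) * ∑ i, y i ^ 2) := by
  have cauchySchwarz := sum_mul_sq_le_sq_mul_sq univ x y
  have hdiag : 0 ≤ ∑ i, x i ^ 2 * y i ^ 2 := by positivity
  rw [expect_sq_dotProduct_signVec_mul_sq]
  linarith

lemma expect_frobeniusNormSq_mul_vecMulVec_signVec_mul_le {α β : Type*} [Fintype α] [Fintype β]
    (X : Matrix α ι ℝ) (B : Matrix ι β ℝ) :
    𝔼 b : ι → Bool, frobeniusNormSq (X * vecMulVec (signVec b) (signVec b) * B) ≤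
      3 * (frobeniusNormSq X * frobeniusNormSq B) := by
  have entry : ∀ (b : ι → Bool) p q, (X * vecMulVec (signVec b) (signVec b) * B) p q =
      (X p ⬝ᵥ signVec b) * (Bᵀ q ⬝ᵥ signVec b) := fun b p q => by
    rw [mul_vecMulVec, vecMulVec_mul, vecMulVec_apply]
    exact congrArg _ (dotProduct_comm _ _)
  calc 𝔼 b : ι → Bool, frobeniusNormSq (X * vecMulVec (signVec b) (signVec b) * B)
      = ∑ p, ∑ q, 𝔼 b, (X p ⬝ᵥ signVec b) ^ 2 * (Bᵀ q ⬝ᵥ signVec b) ^ 2 := by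
        simp only [frobeniusNormSq, entry, mul_pow, expect_sum_comm]
    _ ≤ ∑ p, ∑ q, 3 * ((∑ i, X p i ^ 2) * ∑ i, B i q ^ 2) := by
        gcongr with p _ q _
        exact expect_sq_dotProduct_signVec_mul_sq_le _ _
    _ = 3 * (frobeniusNormSq X * frobeniusNormSq B) := by
        rw [frobeniusNormSq, frobeniusNormSq, sum_comm (f := fun i q => B i q ^ 2), sum_mul_sum,
          mul_sum]
        simp_rw [mul_sum]

end Rademacher

abbrev SignChoice (k : ℕ) (n : ℕ → ℕ) : Type := (ℓ : Fin k) → Fin (n (ℓ.val + 1)) → Bool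

section Sketch

variable {k : ℕ} {n : ℕ → ℕ} (A : ∀ ℓ : ℕ, Matrix (Fin (n ℓ)) (Fin (n (ℓ + 1))) ℝ)

lemma sketchProd_succ_of_lt (ω : SignChoice k n) {m : ℕ} (h : m + 1 < k) :
    sketchProd k n A ω (m + 1) = sketchProd k n A ω m * A m *
      vecMulVec (signVec (ω ⟨m, by omega⟩)) (signVec (ω ⟨m, by omega⟩)) := by
  rw [sketchProd, dif_pos h]
  rfl

lemma sketchProd_succ_of_not_lt (ω : SignChoice k n) {m : ℕ} (h : ¬m + 1 < k) :
    sketchProd k n A ω (m + 1) = sketchProd k n A ω m * A m := by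
  rw [sketchProd, dif_neg h, Matrix.mul_one]

lemma sketchProd_update_of_le (ω : SignChoice k n) {ℓ : Fin k} (c : Fin (n (ℓ.val + 1)) → Bool)
    {m : ℕ} (h : m ≤ ℓ) : sketchProd k n A (update ω ℓ c) m = sketchProd k n A ω m := by
  induction m with
  | zero => rfl
  | succ m ih =>
    by_cases hm : m + 1 < k
    · have hne : (⟨m, by omega⟩ : Fin k) ≠ ℓ := Fin.ne_of_val_ne (Nat.ne_of_lt h)
      rw [sketchProd_succ_of_lt A _ hm, sketchProd_succ_of_lt A _ hm, ih (by omega),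
        update_of_ne hne]
    · rw [sketchProd_succ_of_not_lt A _ hm, sketchProd_succ_of_not_lt A _ hm, ih (by omega)]

lemma expect_sketchProd_eval_eq_expect_expect {M : Type*} [AddCommMonoid M] [Module ℚ≥0 M]
    {m : ℕ} (h : m < k)
    (F : Matrix (Fin (n 0)) (Fin (n m)) ℝ → (Fin (n (m + 1)) → Bool) → M) :
    𝔼 ω : SignChoice k n, F (sketchProd k n A ω m) (ω ⟨m, h⟩) =
      𝔼 ω : SignChoice k n, 𝔼 b, F (sketchProd k n A ω m) b :=
  expect_eval_eq_expect_expect (τ := fun ℓ : Fin k => Fin (n (ℓ.val + 1)) → Bool) ⟨m, h⟩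
    (fun ω b => F (sketchProd k n A ω m) b) fun ω c b => by
      rw [sketchProd_update_of_le A ω c le_rfl]

theorem expect_sketchProd {m : ℕ} (hm : m ≤ k) :
    𝔼 ω : SignChoice k n, sketchProd k n A ω m = leftProd n A m := by
  induction m with
  | zero => simp [sketchProd, leftProd]
  | succ m ih =>
    rw [leftProd, ← ih (by omega), Matrix.expect_mul]
    by_cases h : m + 1 < k
    · simp_rw [sketchProd_succ_of_lt A _ h]
      rw [expect_sketchProd_eval_eq_expect_expect A (by omega)
        fun P b => P * A m * vecMulVec (signVec b) (signVec b)]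
      simp_rw [← Matrix.mul_expect, expect_vecMulVec_signVec, Matrix.mul_one]
    · simp_rw [sketchProd_succ_of_not_lt A _ h]

theorem expect_frobeniusNormSq_sketchProd_mul_le {m : ℕ} (hm : m < k) :
    𝔼 ω : SignChoice k n, frobeniusNormSq (sketchProd k n A ω m * A m) ≤
      3 ^ m * ∏ ℓ ∈ range (m + 1), frobeniusNormSq (A ℓ) := by
  induction m with
  | zero => simp [sketchProd]
  | succ m ih =>
    calc 𝔼 ω : SignChoice k n, frobeniusNormSq (sketchProd k n A ω (m + 1) * A (m + 1))
        = 𝔼 ω : SignChoice k n, 𝔼 b : Fin (n (m + 1)) → Bool, frobeniusNormSq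
            (sketchProd k n A ω m * A m * vecMulVec (signVec b) (signVec b) * A (m + 1)) := by
          simp_rw [sketchProd_succ_of_lt A _ hm]
          exact expect_sketchProd_eval_eq_expect_expect A (by omega) fun P b =>
            frobeniusNormSq (P * A m * vecMulVec (signVec b) (signVec b) * A (m + 1))
      _ ≤ 𝔼 ω : SignChoice k n, 3 * (frobeniusNormSq (sketchProd k n A ω m * A m) *
            frobeniusNormSq (A (m + 1))) := by
          gcongr with ω
          exact expect_frobeniusNormSq_mul_vecMulVec_signVec_mul_le _ _
      _ = 3 * frobeniusNormSq (A (m + 1)) *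
            𝔼 ω : SignChoice k n, frobeniusNormSq (sketchProd k n A ω m * A m) := by
          rw [Finset.mul_expect]
          exact expect_congr rfl fun ω _ => by ring
      _ ≤ 3 * frobeniusNormSq (A (m + 1)) *
            (3 ^ m * ∏ ℓ ∈ range (m + 1), frobeniusNormSq (A ℓ)) := by
          gcongr
          · exact mul_nonneg zero_le_three (frobeniusNormSq_nonneg _)
          · exact ih (by omega)
      _ = 3 ^ (m + 1) * ∏ ℓ ∈ range (m + 2), frobeniusNormSq (A ℓ) := by
          rw [prod_range_succ _ (m + 1)]
          ring

end Sketch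

/-- Independent Rademacher sketches between consecutive matrices: the sketched product
    is an unbiased estimator of A₁⋯A_k, and Tr[Σ] ≤ 3^k ‖A₁‖_F² ⋯ ‖A_k‖_F². -/
theorem multi_matrix_sketch_mean_and_trace (k : ℕ) (n : ℕ → ℕ)
    (A : ∀ ℓ : ℕ, Matrix (Fin (n ℓ)) (Fin (n (ℓ + 1))) ℝ) :
    (∀ (i : Fin (n 0)) (j : Fin (n k)),
        (∑ ω : (ℓ : Fin k) → Fin (n (ℓ.val + 1)) → Bool,
            (Fintype.card ((ℓ : Fin k) → Fin (n (ℓ.val + 1)) → Bool) : ℝ)⁻¹ *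
              sketchProd k n A ω k i j) =
          leftProd n A k i j) ∧
    (∑ ω : (ℓ : Fin k) → Fin (n (ℓ.val + 1)) → Bool,
        (Fintype.card ((ℓ : Fin k) → Fin (n (ℓ.val + 1)) → Bool) : ℝ)⁻¹ *
          ∑ i, ∑ j, (sketchProd k n A ω k i j - leftProd n A k i j) ^ 2) ≤
      3 ^ k * ∏ ℓ : Fin k, ∑ i, ∑ j, (A ℓ i j) ^ 2 := by
  have average : ∀ f : SignChoice k n → ℝ,
      ∑ ω, (Fintype.card (SignChoice k n) : ℝ)⁻¹ * f ω = 𝔼 ω, f ω := fun f => by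
    rw [Fintype.expect_eq_sum_div_card, div_eq_inv_mul, mul_sum]
  refine ⟨fun i j => ?_, ?_⟩
  · rw [average, ← Matrix.expect_apply, expect_sketchProd A le_rfl]
  rw [average]
  rcases k with _ | k
  · simp [sketchProd, leftProd]
  calc 𝔼 ω : SignChoice (k + 1) n,
        frobeniusNormSq (sketchProd (k + 1) n A ω (k + 1) - leftProd n A (k + 1))
      ≤ 𝔼 ω : SignChoice (k + 1) n, frobeniusNormSq (sketchProd (k + 1) n A ω (k + 1)) := by
        rw [← expect_sketchProd A le_rfl]
        exact expect_frobeniusNormSq_sub_expect_le _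
    _ = 𝔼 ω : SignChoice (k + 1) n, frobeniusNormSq (sketchProd (k + 1) n A ω k * A k) := by
        simp_rw [sketchProd_succ_of_not_lt A _ (lt_irrefl _)]
    _ ≤ 3 ^ k * ∏ ℓ ∈ range (k + 1), frobeniusNormSq (A ℓ) :=
        expect_frobeniusNormSq_sketchProd_mul_le A k.lt_succ_self
    _ ≤ 3 ^ (k + 1) * ∏ ℓ : Fin (k + 1), frobeniusNormSq (A ℓ) := by
        rw [Fin.prod_univ_eq_prod_range (fun ℓ => frobeniusNormSq (A ℓ))]
        gcongr
        · exact prod_nonneg fun ℓ _ => frobeniusNormSq_nonneg _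
        · norm_num
        · omega
end
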